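/- Assume 𝕍 is continuous. Let μ : 𝓕 → [0,1] be finitely additive (μ(A ∪ B) = μ(A) + μ(B) for disjoint A, B ∈ 𝓕) with μ(∅) = 0, μ(Ω) = 1, and μ(A) ≤ 𝕍(A) for all A ∈ 𝓕. Then μ is countably additive, i.e., μ extends to a probability measure on (Ω, 𝓕), and this probability measure belongs to Θ. -/

import Mathlib

open MeasureTheory Filter
open scoped ENNReal

/-! A finite, finitely additive set function on a ring of sets is countably additive as soon as
it is continuous at `∅`. Here `μ` inherits this continuity from the upper probability `V`, which
dominates it, so `μ` is a probability measure; as `μ ≤ V`, maximality of `Θ` puts it in `Θ`. -/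

namespace MeasureTheory

variable {Ω : Type*} [MeasurableSpace Ω]

theorem isSetRing_measurableSet : IsSetRing {s : Set Ω | MeasurableSet s} :=
  ⟨.empty, fun _ _ => .union, fun _ _ => .diff⟩

namespace AddContent

variable (m : AddContent ℝ≥0∞ {s : Set Ω | MeasurableSet s})
  (hm_ne_top : ∀ s, MeasurableSet s → m s ≠ ∞)
  (hm_tendsto : ∀ s : ℕ → Set Ω, (∀ n, MeasurableSet (s n)) → Antitone s →
    (⋂ n, s n) = ∅ → Tendsto (fun n => m (s n)) atTop (nhds 0))

noncomputable def measureOfTendstoZero : Measure Ω :=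
  Measure.ofMeasurable (fun s _ => m s) (addContent_empty (m := m)) fun _ hf hdisj =>
    addContent_iUnion_eq_sum_of_tendsto_zero isSetRing_measurableSet m hm_ne_top
      hm_tendsto hf (MeasurableSet.iUnion hf) hdisj

theorem measureOfTendstoZero_apply {s : Set Ω} (hs : MeasurableSet s) :
    m.measureOfTendstoZero hm_ne_top hm_tendsto s = m s :=
  Measure.ofMeasurable_apply s hs

end AddContent

end MeasureTheory

theorem stmt_9_general {Ω : Type*} [MeasurableSpace Ω]
    (Θ : Set (Measure Ω))
    (V : Set Ω → ℝ≥0∞)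
    (hmax : ∀ P : Measure Ω, IsProbabilityMeasure P →
      (∀ A, MeasurableSet A → P A ≤ V A) → P ∈ Θ)
    (hcont : ∀ A : ℕ → Set Ω, (∀ n, MeasurableSet (A n)) → Antitone A →
      (⋂ n, A n) = ∅ → Tendsto (fun n => V (A n)) atTop (nhds 0))
    (μ : Set Ω → ℝ≥0∞)
    (hadd : ∀ A B : Set Ω, MeasurableSet A → MeasurableSet B → Disjoint A B →
      μ (A ∪ B) = μ A + μ B)
    (hempty : μ ∅ = 0) (huniv : μ Set.univ = 1)
    (hdom : ∀ A : Set Ω, MeasurableSet A → μ A ≤ V A) :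
    ∃ P : Measure Ω, IsProbabilityMeasure P ∧ P ∈ Θ ∧
      ∀ A : Set Ω, MeasurableSet A → P A = μ A := by
  let m : AddContent ℝ≥0∞ {s : Set Ω | MeasurableSet s} :=
    isSetRing_measurableSet.addContent_of_union μ hempty fun hs ht hst => hadd _ _ hs ht hst
  have hm_ne_top (A : Set Ω) (hA : MeasurableSet A) : m A ≠ ∞ :=
    ((addContent_mono isSetRing_measurableSet.isSetSemiring hA MeasurableSet.univ
      (Set.subset_univ A)).trans_eq huniv).trans_lt ENNReal.one_lt_top |>.ne
  have hm_tendsto (A : ℕ → Set Ω) (hA : ∀ n, MeasurableSet (A n)) (hanti : Antitone A)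
      (hinter : (⋂ n, A n) = ∅) : Tendsto (fun n => m (A n)) atTop (nhds 0) :=
    tendsto_of_tendsto_of_tendsto_of_le_of_le tendsto_const_nhds (hcont A hA hanti hinter)
      (fun _ => zero_le) fun n => hdom _ (hA n)
  let P := m.measureOfTendstoZero hm_ne_top hm_tendsto
  have hP (A : Set Ω) (hA : MeasurableSet A) : P A = μ A :=
    m.measureOfTendstoZero_apply hm_ne_top hm_tendsto hA
  have hPprob : IsProbabilityMeasure P := ⟨(hP _ .univ).trans huniv⟩
  exact ⟨P, hPprob, hmax P hPprob fun A hA => (hP A hA).trans_le (hdom A hA), hP⟩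

/-- If `V` is continuous, then every finitely additive
`μ : 𝓕 → [0,1]` with `μ(∅) = 0`, `μ(Ω) = 1` and `μ ≤ V` is countably additive:
it extends to a probability measure on `(Ω, 𝓕)` belonging to `Θ`. -/
theorem stmt_9 {Ω : Type*} [MeasurableSpace Ω]
    (Θ : Set (Measure Ω)) (hΘne : Θ.Nonempty)
    (hprob : ∀ P ∈ Θ, IsProbabilityMeasure P)
    (V : Set Ω → ℝ≥0∞)
    (hV : ∀ A : Set Ω, V A = ⨆ P ∈ Θ, P A)
    (hmax : ∀ P : Measure Ω, IsProbabilityMeasure P →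
      (∀ A, MeasurableSet A → P A ≤ V A) → P ∈ Θ)
    (hcont : ∀ A : ℕ → Set Ω, (∀ n, MeasurableSet (A n)) → Antitone A →
      (⋂ n, A n) = ∅ → Tendsto (fun n => V (A n)) atTop (nhds 0))
    (μ : Set Ω → ℝ≥0∞)
    (hle1 : ∀ A : Set Ω, MeasurableSet A → μ A ≤ 1)
    (hadd : ∀ A B : Set Ω, MeasurableSet A → MeasurableSet B → Disjoint A B →
      μ (A ∪ B) = μ A + μ B)
    (hempty : μ ∅ = 0) (huniv : μ Set.univ = 1)
    (hdom : ∀ A : Set Ω, MeasurableSet A → μ A ≤ V A) :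
    ∃ P : Measure Ω, IsProbabilityMeasure P ∧ P ∈ Θ ∧
      ∀ A : Set Ω, MeasurableSet A → P A = μ A :=
  stmt_9_general Θ V hmax hcont μ hadd hempty huniv hdom
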